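/- arXiv:2202.07216 — 4 statements merged into one kernel-verified Lean document; each statement's English description precedes it below -/
import Mathlib

section
/- Let n, k be integers with 1 ≤ k < n, K = {p ∈ [0,1]^n : Σ_i p_i = k}, and U ⊆ {1,…,n} with |U| = k. Then for every p ∈ K: f̄_U(p) ≥ (1/((n−k)·k·C(n,k))) · (∏_{i∈U} p_i) · (∏_{i∉U} (1−p_i)), where C(n,k) is the binomial coefficient n choose k. -/
open Finset

/-- The domain `K = {p ∈ [0,1]^n : ∑ i, p i = k}`. -/
def Ksimplex (n k : ℕ) : Set (Fin n → ℝ) :=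
  {p | (∀ i, 0 ≤ p i ∧ p i ≤ 1) ∧ ∑ i, p i = (k : ℝ)}

/-- `g_U(x) = (1/(n-k)) · ∏_{i∈U} x_i · ∏_{i∉U} (1-x_i) · ∑_{i∉U} x_i`. -/
noncomputable def gSampford (n k : ℕ) (U : Finset (Fin n)) (x : Fin n → ℝ) : ℝ :=
  (1 / ((n : ℝ) - (k : ℝ))) * (∏ i ∈ U, x i) * (∏ i ∈ Uᶜ, (1 - x i)) * (∑ i ∈ Uᶜ, x i)

/-- `∑_{V ⊆ [n], |V| = k} g_V(x)`. -/
noncomputable def sumg (n k : ℕ) (x : Fin n → ℝ) : ℝ :=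
  ∑ V ∈ Finset.powersetCard k (Finset.univ : Finset (Fin n)), gSampford n k V x

/-- The indicator vector `e_U` of a subset `U`. -/
def eU {n : ℕ} (U : Finset (Fin n)) : Fin n → ℝ := fun i => if i ∈ U then 1 else 0
open Classical in
/-- The continuous completion `f̄_U` of `f_U = g_U / ∑_V g_V` on `K`. -/
noncomputable def fbar (n k : ℕ) (U : Finset (Fin n)) (x : Fin n → ℝ) : ℝ :=
  if x = eU U then 1
  else if ∃ V : Finset (Fin n), V.card = k ∧ x = eU V then 0
  else gSampford n k U x / sumg n k x

/-!
Write `S = ∑_{i ∉ U} p_i`. Every term of the normalising sum satisfies `g_V(p) ≤ k S / (n - k)`: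
for `V = U` because the two products are at most `1` and `∑_{i ∉ U} p_i = S`, and for `V ≠ U`
because `V` contains some `j ∉ U`, so `∏_{i ∈ V} p_i ≤ p_j ≤ S` while `∑_{i ∉ V} p_i ≤ k`.
Summing over the `C(n,k)` sets `V` and using `n - k ≥ 1` gives `∑_V g_V(p) ≤ k C(n,k) S`, whence
`f_U(p) ≥ g_U(p) / (k C(n,k) S)`, which is the claimed bound. Off the vertex `e_U` of `K` we have
`S > 0`; at the vertices `f̄_U` is `1` or the product `∏_{i ∈ U} p_i` vanishes.
-/

section UnitInterval

variable {ι : Type*} {p : ι → ℝ}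

lemma prod_le_apply_of_mem [DecidableEq ι] (h01 : ∀ i, 0 ≤ p i ∧ p i ≤ 1) {s : Finset ι} {j : ι}
    (hj : j ∈ s) :
    ∏ i ∈ s, p i ≤ p j := by
  rw [← mul_prod_erase s p hj]
  exact mul_le_of_le_one_right (h01 j).1 (prod_le_one (fun i _ => (h01 i).1) fun i _ => (h01 i).2)

lemma prod_one_sub_nonneg (h01 : ∀ i, 0 ≤ p i ∧ p i ≤ 1) (s : Finset ι) :
    0 ≤ ∏ i ∈ s, (1 - p i) :=
  prod_nonneg fun i _ => sub_nonneg.2 (h01 i).2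

lemma prod_one_sub_le_one (h01 : ∀ i, 0 ≤ p i ∧ p i ≤ 1) (s : Finset ι) :
    ∏ i ∈ s, (1 - p i) ≤ 1 :=
  prod_le_one (fun i _ => sub_nonneg.2 (h01 i).2) fun i _ => sub_le_self _ (h01 i).1

end UnitInterval

variable {n k : ℕ} {U V : Finset (Fin n)} {p : Fin n → ℝ}

lemma eq_eU_of_sum_compl_eq_zero (hU : U.card = k) (hp : p ∈ Ksimplex n k)
    (hS : ∑ i ∈ Uᶜ, p i = 0) : p = eU U := by
  obtain ⟨h01, hsum⟩ := hp
  have hzero := (sum_eq_zero_iff_of_nonneg fun i _ => (h01 i).1).1 hS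
  have hsumU : ∑ i ∈ U, p i = ∑ i ∈ U, (1 : ℝ) := by
    rw [← sum_add_sum_compl U p, hS, add_zero] at hsum
    simp [hsum, hU]
  have hone := (sum_eq_sum_iff_of_le fun i _ => (h01 i).2).1 hsumU
  funext i
  by_cases hi : i ∈ U
  · simp [eU, hi, hone i hi]
  · simp [eU, hi, hzero i (mem_compl.2 hi)]

lemma prod_eU_eq_zero_of_ne (hU : U.card = k) (hV : V.card = k) (hVU : V ≠ U) :
    ∏ i ∈ U, eU V i = 0 := by
  obtain ⟨j, hjU, hjV⟩ : ∃ j ∈ U, j ∉ V := by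
    by_contra! hsub
    exact hVU (eq_of_subset_of_card_le hsub (by rw [hU, hV])).symm
  exact prod_eq_zero hjU (by simp [eU, hjV])

lemma gSampford_nonneg (hkn : k ≤ n) (V : Finset (Fin n)) (h01 : ∀ i, 0 ≤ p i ∧ p i ≤ 1) :
    0 ≤ gSampford n k V p := by
  have hnk : (0 : ℝ) ≤ n - k := sub_nonneg.2 (by exact_mod_cast hkn)
  have hP : 0 ≤ ∏ i ∈ V, p i := prod_nonneg fun i _ => (h01 i).1
  have hQ := prod_one_sub_nonneg h01 Vᶜ
  have hS : 0 ≤ ∑ i ∈ Vᶜ, p i := sum_nonneg fun i _ => (h01 i).1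
  unfold gSampford
  positivity

lemma sumg_nonneg (hkn : k ≤ n) (h01 : ∀ i, 0 ≤ p i ∧ p i ≤ 1) : 0 ≤ sumg n k p :=
  sum_nonneg fun V _ => gSampford_nonneg hkn V h01

lemma gSampford_le_sumg (hkn : k ≤ n) (hU : U.card = k) (h01 : ∀ i, 0 ≤ p i ∧ p i ≤ 1) :
    gSampford n k U p ≤ sumg n k p :=
  single_le_sum (fun V _ => gSampford_nonneg hkn V h01) (mem_powersetCard_univ.2 hU)

lemma prod_mul_sum_compl_le (hk : 1 ≤ k) (hU : U.card = k) (hV : V.card = k)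
    (hp : p ∈ Ksimplex n k) :
    (∏ i ∈ V, p i) * ∑ i ∈ Vᶜ, p i ≤ k * ∑ i ∈ Uᶜ, p i := by
  obtain ⟨h01, hsum⟩ := hp
  have hk1 : (1 : ℝ) ≤ k := by exact_mod_cast hk
  have hP0 : 0 ≤ ∏ i ∈ V, p i := prod_nonneg fun i _ => (h01 i).1
  have hP1 : ∏ i ∈ V, p i ≤ 1 := prod_le_one (fun i _ => (h01 i).1) fun i _ => (h01 i).2
  have hS0 : ∀ W : Finset (Fin n), 0 ≤ ∑ i ∈ W, p i := fun W => sum_nonneg fun i _ => (h01 i).1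
  by_cases hVU : V = U
  · subst hVU
    calc (∏ i ∈ V, p i) * ∑ i ∈ Vᶜ, p i ≤ 1 * ∑ i ∈ Vᶜ, p i := by gcongr; exact hS0 _
      _ ≤ k * ∑ i ∈ Vᶜ, p i := by gcongr; exact hS0 _
  · obtain ⟨j, hjV, hjU⟩ : ∃ j ∈ V, j ∉ U := by
      by_contra! hsub
      exact hVU (eq_of_subset_of_card_le hsub (by rw [hU, hV]))
    have hPS : ∏ i ∈ V, p i ≤ ∑ i ∈ Uᶜ, p i :=
      (prod_le_apply_of_mem h01 hjV).trans
        (single_le_sum (fun i _ => (h01 i).1) (mem_compl.2 hjU))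
    have hSk : ∑ i ∈ Vᶜ, p i ≤ k :=
      hsum ▸ sum_le_sum_of_subset_of_nonneg (subset_univ _) fun i _ _ => (h01 i).1
    calc (∏ i ∈ V, p i) * ∑ i ∈ Vᶜ, p i ≤ (∑ i ∈ Uᶜ, p i) * k :=
          mul_le_mul hPS hSk (hS0 _) (hS0 _)
      _ = k * ∑ i ∈ Uᶜ, p i := mul_comm _ _

lemma gSampford_le (hk : 1 ≤ k) (hkn : k ≤ n) (hU : U.card = k) (hV : V.card = k)
    (hp : p ∈ Ksimplex n k) :
    gSampford n k V p ≤ k * (∑ i ∈ Uᶜ, p i) / (n - k) := by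
  have hnk : (0 : ℝ) ≤ n - k := sub_nonneg.2 (by exact_mod_cast hkn)
  have hg : gSampford n k V p
      = (∏ i ∈ V, p i) * (∑ i ∈ Vᶜ, p i) * (∏ i ∈ Vᶜ, (1 - p i)) / (n - k) := by
    unfold gSampford; ring
  have hPS0 : 0 ≤ (∏ i ∈ V, p i) * ∑ i ∈ Vᶜ, p i :=
    mul_nonneg (prod_nonneg fun i _ => (hp.1 i).1) (sum_nonneg fun i _ => (hp.1 i).1)
  rw [hg]
  refine div_le_div_of_nonneg_right ?_ hnk
  calc (∏ i ∈ V, p i) * (∑ i ∈ Vᶜ, p i) * (∏ i ∈ Vᶜ, (1 - p i))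
      ≤ (∏ i ∈ V, p i) * ∑ i ∈ Vᶜ, p i := mul_le_of_le_one_right hPS0 (prod_one_sub_le_one hp.1 _)
    _ ≤ k * ∑ i ∈ Uᶜ, p i := prod_mul_sum_compl_le hk hU hV hp

lemma sumg_le (hk : 1 ≤ k) (hkn : k ≤ n) (hU : U.card = k) (hp : p ∈ Ksimplex n k) :
    sumg n k p ≤ n.choose k * (k * (∑ i ∈ Uᶜ, p i) / (n - k)) := by
  calc sumg n k p ≤ ∑ _V ∈ powersetCard k (univ : Finset (Fin n)), k * (∑ i ∈ Uᶜ, p i) / (n - k) :=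
        sum_le_sum fun V hV => gSampford_le hk hkn hU (mem_powersetCard_univ.1 hV) hp
    _ = n.choose k * (k * (∑ i ∈ Uᶜ, p i) / (n - k)) := by simp

lemma le_gSampford_div_sumg (hk : 1 ≤ k) (hkn : k < n) (hU : U.card = k)
    (hp : p ∈ Ksimplex n k) (hpU : p ≠ eU U) :
    1 / (((n : ℝ) - k) * k * n.choose k) * (∏ i ∈ U, p i) * (∏ i ∈ Uᶜ, (1 - p i))
      ≤ gSampford n k U p / sumg n k p := by
  have hS : 0 < ∑ i ∈ Uᶜ, p i := (sum_nonneg fun i _ => (hp.1 i).1).lt_of_ne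
    fun h => hpU (eq_eU_of_sum_compl_eq_zero hU hp h.symm)
  have hnk : (1 : ℝ) ≤ n - k := by
    have : (k : ℝ) + 1 ≤ n := by exact_mod_cast hkn
    linarith
  have hk0 : (0 : ℝ) < k := by exact_mod_cast hk
  have hC : (0 : ℝ) < n.choose k := by exact_mod_cast Nat.choose_pos hkn.le
  have hg0 := gSampford_nonneg hkn.le U hp.1
  have hlhs : 1 / (((n : ℝ) - k) * k * n.choose k) * (∏ i ∈ U, p i) * (∏ i ∈ Uᶜ, (1 - p i))
      = gSampford n k U p / (k * n.choose k * ∑ i ∈ Uᶜ, p i) := by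
    have : (n : ℝ) - k ≠ 0 := by linarith
    unfold gSampford
    field_simp
  rw [hlhs]
  rcases (sumg_nonneg hkn.le hp.1).eq_or_lt with h0 | hpos
  · have hgU : gSampford n k U p = 0 :=
      le_antisymm (h0 ▸ gSampford_le_sumg hkn.le hU hp.1) hg0
    simp [hgU]
  · apply div_le_div_of_nonneg_left hg0 hpos
    calc sumg n k p ≤ n.choose k * (k * (∑ i ∈ Uᶜ, p i) / (n - k)) := sumg_le hk hkn.le hU hp
      _ ≤ n.choose k * (k * ∑ i ∈ Uᶜ, p i) := by gcongr; exact div_le_self (by positivity) hnk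
      _ = k * n.choose k * ∑ i ∈ Uᶜ, p i := by ring

theorem stmt14 (n k : ℕ) (hk : 1 ≤ k) (hkn : k < n)
    (U : Finset (Fin n)) (hU : U.card = k) :
    ∀ p ∈ Ksimplex n k,
      (1 / (((n : ℝ) - (k : ℝ)) * (k : ℝ) * (n.choose k : ℝ))) *
          (∏ i ∈ U, p i) * (∏ i ∈ Uᶜ, (1 - p i))
        ≤ fbar n k U p := by
  intro p hp
  unfold fbar
  split_ifs with hpU hvertex
  · have hD : (1 : ℝ) ≤ ((n : ℝ) - k) * k * n.choose k := by
      refine one_le_mul_of_one_le_of_one_le (one_le_mul_of_one_le_of_one_le ?_ ?_) ?_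
      · have : (k : ℝ) + 1 ≤ n := by exact_mod_cast hkn
        linarith
      · exact_mod_cast hk
      · exact_mod_cast Nat.choose_pos hkn.le
    have hc : 1 / (((n : ℝ) - k) * k * n.choose k) ≤ 1 :=
      div_le_one_of_le₀ hD (zero_le_one.trans hD)
    exact mul_le_one₀ (mul_le_one₀ hc (prod_nonneg fun i _ => (hp.1 i).1)
      (prod_le_one (fun i _ => (hp.1 i).1) fun i _ => (hp.1 i).2))
      (prod_one_sub_nonneg hp.1 _) (prod_one_sub_le_one hp.1 _)
  · obtain ⟨V, hV, rfl⟩ := hvertex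
    rw [prod_eU_eq_zero_of_ne hU hV fun h => hpU (h ▸ rfl)]
    simp
  · exact le_gSampford_div_sumg hk hkn hU hp hpU
end

section
/- Let n, k be integers with 1 ≤ k < n, K = {p ∈ [0,1]^n : Σ_i p_i = k}, and U ⊆ {1,…,n} with |U| = k. Then the function p ↦ 1 − f̄_U(p) is polynomially bounded on K. -/
open Finset

def cube (n : ℕ) : Set (Fin n → ℝ) := {p | ∀ i, 0 ≤ p i ∧ p i ≤ 1}

/-- The open face `F_{A,S,B}` of the hypercube, where `S` is the complement of `A ∪ B`. -/
def face {n : ℕ} (A B : Finset (Fin n)) : Set (Fin n → ℝ) :=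
  {p | (∀ i ∈ A, p i = 0) ∧ (∀ i ∈ B, p i = 1) ∧ ∀ i ∉ A ∪ B, 0 < p i ∧ p i < 1}

/-- `(1-p)^A · (p(1-p))^S · p^B` for the face `F_{A,S,B}`. -/
noncomputable def facePoly {n : ℕ} (A B : Finset (Fin n)) (p : Fin n → ℝ) : ℝ :=
  (∏ i ∈ A, (1 - p i)) * (∏ i ∈ (A ∪ B)ᶜ, p i * (1 - p i)) * (∏ i ∈ B, p i)
/-- A function `f : K → [0,1]` is polynomially bounded on the compact subdomain `K`. -/
def PolyBoundedOn {n : ℕ} (K : Set (Fin n → ℝ)) (f : (Fin n → ℝ) → ℝ) : Prop :=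
  ∃ (m : ℕ) (c : ℝ), 0 < c ∧ ∀ A B : Finset (Fin n), Disjoint A B →
    (∃ q ∈ K ∩ face A B, 0 < f q) →
    ∀ p ∈ K, c * facePoly A B p ^ m ≤ f p
/-!
If `1 - f̄_U` is positive somewhere on the open face `F_{A,S,B}`, that face does not contain
`e_U`, so some coordinate `j` lies in `U \ B` or outside `U ∪ A`. On the whole cube the face
polynomial is then at most `t = |e_U j - p j|`, and it suffices to show `1 - f̄_U ≥ t² / 2` on `K`,
i.e. `t² g_U ≤ ∑_{V ≠ U} g_V` away from the vertices. This comes from exchanging `j` with the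
other coordinates: for `j ∈ U`, `(1 - p j) g_U ≤ ∑_{i ∉ U} g_{U - j + i}`; for `j ∉ U`,
`p j ² g_U ≤ ∑_{i ∈ U} g_{U - i + j}`, where `∑ p = k` gives `∑_{i ∈ U} (1 - p i) = ∑_{i ∉ U} p i`
and an elementary inequality finishes. Hence `m = 2` and `c = 1/2` work.
-/

section General
variable {ι : Type*}

lemma Finset.prod_le_of_mem {s : Finset ι} {f : ι → ℝ} (h0 : ∀ i ∈ s, 0 ≤ f i)
    (h1 : ∀ i ∈ s, f i ≤ 1) {j : ι} (hj : j ∈ s) : ∏ i ∈ s, f i ≤ f j := by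
  simpa using prod_le_prod_of_subset_of_le_one (singleton_subset_iff.2 hj) h0
    (fun i hi _ => h1 i hi)

lemma Finset.sum_comp_le_sum_of_injOn {κ : Type*} {s : Finset ι} {t : Finset κ} {σ : ι → κ}
    {f : κ → ℝ} (hσ : Set.InjOn σ s) (hst : ∀ i ∈ s, σ i ∈ t) (hf : ∀ b ∈ t, 0 ≤ f b) :
    ∑ i ∈ s, f (σ i) ≤ ∑ b ∈ t, f b := by
  classical
  rw [← sum_image hσ]
  exact sum_le_sum_of_subset_of_nonneg (image_subset_iff.2 hst) fun b hb _ => hf b hb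

lemma mul_one_sub_mul_add_le_sum {s : Finset ι} {p : ι → ℝ} (hp : ∀ i ∈ s, 0 ≤ p i ∧ p i ≤ 1)
    {a b : ℝ} (ha : 0 ≤ a ∧ a ≤ 1) (hb : 0 ≤ b) (hsum : ∑ i ∈ s, (1 - p i) = a + b) :
    a * (1 - a) * (a + b) ≤ ∑ i ∈ s, (1 - p i) * (p i + b) := by
  set S := a + b
  have hsplit : ∑ i ∈ s, (1 - p i) * (p i + b) = ∑ i ∈ s, (1 - p i) * p i + S * b := by
    simp only [mul_add, sum_add_distrib, ← sum_mul, hsum]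
  have hQ : 0 ≤ ∑ i ∈ s, (1 - p i) * p i :=
    sum_nonneg fun i hi => mul_nonneg (by linarith [(hp i hi).2]) (hp i hi).1
  rw [hsplit]
  rcases le_or_gt S 1 with hS | hS
  · -- every `p i` is at least `1 - S`, so the first sum is at least `(1 - S) * S`
    have hQS : (1 - S) * S ≤ ∑ i ∈ s, (1 - p i) * p i := by
      rw [← hsum, mul_comm, sum_mul]
      refine sum_le_sum fun i hi => mul_le_mul_of_nonneg_left ?_ (by linarith [(hp i hi).2])
      have := single_le_sum (f := fun i => 1 - p i) (fun l hl => by linarith [(hp l hl).2]) hi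
      linarith
    nlinarith [mul_nonneg (by linarith : 0 ≤ S) (sq_nonneg (1 - a))]
  · -- here `S * b - a * (1 - a) * S = S * ((1 - a) ^ 2 + (S - 1))`
    nlinarith [mul_nonneg (by linarith : 0 ≤ S)
      (add_nonneg (sq_nonneg (1 - a)) (sub_nonneg.2 hS.le))]

end General

section Face
variable {n : ℕ}

lemma facePoly_eq {A B : Finset (Fin n)} (hAB : Disjoint A B) (p : Fin n → ℝ) :
    facePoly A B p = (∏ i ∈ Bᶜ, (1 - p i)) * ∏ i ∈ Aᶜ, p i := by
  have hd := disjoint_left.1 hAB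
  have hB : Bᶜ = A ∪ (A ∪ B)ᶜ := by ext i; simp only [mem_compl, mem_union]; grind
  have hA : Aᶜ = (A ∪ B)ᶜ ∪ B := by ext i; simp only [mem_compl, mem_union]; grind
  rw [hB, hA, prod_union (disjoint_left.2 fun i hi h => mem_compl.1 h (mem_union_left _ hi)),
    prod_union (disjoint_right.2 fun i hi h => mem_compl.1 h (mem_union_right _ hi)),
    facePoly, prod_mul_distrib]
  ring

lemma facePoly_sq_le {A B U : Finset (Fin n)} (hAB : Disjoint A B) {p : Fin n → ℝ}
    (hp : p ∈ cube n) {j : Fin n} (hj : (j ∈ U ∧ j ∉ B) ∨ (j ∉ U ∧ j ∉ A)) :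
    facePoly A B p ^ 2 ≤ (eU U j - p j) ^ 2 := by
  have h0 : 0 ≤ ∏ i ∈ Bᶜ, (1 - p i) := prod_nonneg fun i _ => by linarith [(hp i).2]
  have h1 : ∏ i ∈ Bᶜ, (1 - p i) ≤ 1 :=
    prod_le_one (fun i _ => by linarith [(hp i).2]) fun i _ => by linarith [(hp i).1]
  have h0' : 0 ≤ ∏ i ∈ Aᶜ, p i := prod_nonneg fun i _ => (hp i).1
  have h1' : ∏ i ∈ Aᶜ, p i ≤ 1 := prod_le_one (fun i _ => (hp i).1) fun i _ => (hp i).2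
  rw [facePoly_eq hAB]
  refine (pow_le_pow_left₀ (mul_nonneg h0 h0') ?_ 2).trans (sq_abs _).le
  rcases hj with ⟨hjU, hjB⟩ | ⟨hjU, hjA⟩
  · have := prod_le_of_mem (f := fun i => 1 - p i) (fun i _ => by linarith [(hp i).2])
      (fun i _ => by linarith [(hp i).1]) (mem_compl.2 hjB)
    simp only [eU, hjU, if_true]
    exact (mul_le_of_le_one_right h0 h1').trans (this.trans (le_abs_self _))
  · have := prod_le_of_mem (f := p) (fun i _ => (hp i).1) (fun i _ => (hp i).2) (mem_compl.2 hjA)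
    simp only [eU, hjU, if_false]
    exact (mul_le_of_le_one_left h0' h1).trans (by linarith [neg_le_abs (0 - p j)])

lemma exists_index_of_mem_face_of_ne_eU {A B U : Finset (Fin n)} {q : Fin n → ℝ}
    (hq : q ∈ face A B) (hqU : q ≠ eU U) : ∃ j, (j ∈ U ∧ j ∉ B) ∨ (j ∉ U ∧ j ∉ A) := by
  by_contra! h
  refine hqU (funext fun i => ?_)
  by_cases hi : i ∈ U
  · simp only [eU, hi, if_true]; exact hq.2.1 i ((h i).1 hi)
  · simp only [eU, hi, if_false]; exact hq.1 i ((h i).2 hi)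

end Face

namespace Sampford
variable {ι : Type*} [Fintype ι] [DecidableEq ι]

/-- `g_U` without its factor `1 / (n - k)`, which cancels in `f_U`. -/
noncomputable def weight (U : Finset ι) (p : ι → ℝ) : ℝ :=
  (∏ i ∈ U, p i) * (∏ i ∈ Uᶜ, (1 - p i)) * ∑ i ∈ Uᶜ, p i

variable {U : Finset ι} {p : ι → ℝ}

lemma weight_nonneg (hp : ∀ i, 0 ≤ p i ∧ p i ≤ 1) (U : Finset ι) : 0 ≤ weight U p :=
  mul_nonneg (mul_nonneg (prod_nonneg fun i _ => (hp i).1)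
    (prod_nonneg fun i _ => by linarith [(hp i).2])) (sum_nonneg fun i _ => (hp i).1)

lemma compl_insert_erase {i j : ι} (hi : i ∉ U) (hj : j ∈ U) :
    (insert i (U.erase j))ᶜ = insert j (Uᶜ.erase i) := by
  rw [compl_insert, compl_erase, erase_insert_of_ne (by rintro rfl; exact hi hj)]

lemma weight_insert_erase {i j : ι} (hi : i ∉ U) (hj : j ∈ U) :
    weight (insert i (U.erase j)) p =
      p i * (∏ l ∈ U.erase j, p l) * ((1 - p j) * ∏ l ∈ Uᶜ.erase i, (1 - p l)) *
        (p j + ∑ l ∈ Uᶜ.erase i, p l) := by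
  have hi' : i ∉ U.erase j := fun h => hi (mem_of_mem_erase h)
  have hj' : j ∉ Uᶜ.erase i := fun h => mem_compl.1 (mem_of_mem_erase h) hj
  rw [weight, compl_insert_erase hi hj, prod_insert hi', prod_insert hj', sum_insert hj']

lemma one_sub_mul_weight_le_sum_swap (hp : ∀ i, 0 ≤ p i ∧ p i ≤ 1) {j : ι} (hj : j ∈ U) :
    (1 - p j) * weight U p ≤ ∑ i ∈ Uᶜ, weight (insert i (U.erase j)) p := by
  set E := ∏ l ∈ U.erase j, p l
  set C := ∏ l ∈ Uᶜ, (1 - p l)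
  have hE : 0 ≤ E := prod_nonneg fun l _ => (hp l).1
  have hw : (1 - p j) * weight U p = ∑ i ∈ Uᶜ, p i * E * ((1 - p j) * C) * p j := by
    rw [weight, ← mul_prod_erase U p hj, mul_sum, mul_sum]
    exact sum_congr rfl fun i _ => by ring
  rw [hw]
  refine sum_le_sum fun i hi => ?_
  have hi' := mem_compl.1 hi
  rw [weight_insert_erase hi' hj]
  have hC : C ≤ ∏ l ∈ Uᶜ.erase i, (1 - p l) := by
    rw [show C = _ from (mul_prod_erase _ (fun l => 1 - p l) hi).symm]
    exact mul_le_of_le_one_left (prod_nonneg fun l _ => by linarith [(hp l).2])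
      (by linarith [(hp i).1])
  have hS : 0 ≤ ∑ l ∈ Uᶜ.erase i, p l := sum_nonneg fun l _ => (hp l).1
  have : 0 ≤ ∏ l ∈ Uᶜ.erase i, (1 - p l) := prod_nonneg fun l _ => by linarith [(hp l).2]
  have := (hp i).1; have := (hp j).1; have : 0 ≤ 1 - p j := by linarith [(hp j).2]
  gcongr
  linarith

lemma sq_mul_weight_le_sum_swap (hp : ∀ i, 0 ≤ p i ∧ p i ≤ 1)
    (hbal : ∑ i ∈ U, (1 - p i) = ∑ i ∈ Uᶜ, p i) {j : ι} (hj : j ∉ U) :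
    p j ^ 2 * weight U p ≤ ∑ i ∈ U, weight (insert j (U.erase i)) p := by
  have hjc : j ∈ Uᶜ := mem_compl.2 hj
  set P := ∏ l ∈ U, p l
  set C := ∏ l ∈ Uᶜ.erase j, (1 - p l)
  set S := ∑ l ∈ Uᶜ.erase j, p l
  have hP : 0 ≤ P := prod_nonneg fun l _ => (hp l).1
  have hC : 0 ≤ C := prod_nonneg fun l _ => by linarith [(hp l).2]
  have hS : 0 ≤ S := sum_nonneg fun l _ => (hp l).1
  have hw : weight U p = P * ((1 - p j) * C) * (p j + S) := by
    rw [weight, ← mul_prod_erase _ _ hjc, ← add_sum_erase _ _ hjc]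
  have hkey := mul_one_sub_mul_add_le_sum (fun i _ => hp i) (hp j) hS
    (by rw [hbal, ← add_sum_erase _ _ hjc])
  calc p j ^ 2 * weight U p = p j * P * C * (p j * (1 - p j) * (p j + S)) := by rw [hw]; ring
    _ ≤ p j * P * C * ∑ i ∈ U, (1 - p i) * (p i + S) := by
        have := (hp j).1
        gcongr
    _ = ∑ i ∈ U, p j * P * ((1 - p i) * C) * (p i + S) := by
        rw [mul_sum]; exact sum_congr rfl fun i _ => by ring
    _ ≤ ∑ i ∈ U, weight (insert j (U.erase i)) p := by
        refine sum_le_sum fun i hi => ?_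
        rw [weight_insert_erase hj hi]
        have hPi : P ≤ ∏ l ∈ U.erase i, p l := by
          rw [show P = _ from (mul_prod_erase _ p hi).symm]
          exact mul_le_of_le_one_left (prod_nonneg fun l _ => (hp l).1) (hp i).2
        have := (hp i).1; have := (hp i).2; have := (hp j).1
        gcongr

section Simplex
variable {n k : ℕ}

lemma sum_one_sub_eq_sum_compl {U : Finset (Fin n)} (hU : U.card = k) {p : Fin n → ℝ}
    (hsum : ∑ i, p i = k) : ∑ i ∈ U, (1 - p i) = ∑ i ∈ Uᶜ, p i := by
  rw [sum_sub_distrib, sum_const, hU, nsmul_one, ← hsum, ← sum_add_sum_compl U p]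
  ring

lemma insert_erase_mem_powersetCard_erase {U : Finset (Fin n)} (hU : U.card = k) {i j : Fin n}
    (hi : i ∉ U) (hj : j ∈ U) : insert i (U.erase j) ∈ (powersetCard k univ).erase U := by
  have hi' : i ∉ U.erase j := fun h => hi (mem_of_mem_erase h)
  refine mem_erase.2 ⟨fun h => hi (h ▸ mem_insert_self i _), mem_powersetCard_univ.2 ?_⟩
  rw [card_insert_of_notMem hi', card_erase_of_mem hj, hU]
  have := card_pos.2 ⟨j, hj⟩
  omega

lemma sq_eU_sub_mul_weight_le {U : Finset (Fin n)} (hU : U.card = k) {p : Fin n → ℝ}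
    (hp : p ∈ Ksimplex n k) (j : Fin n) :
    (eU U j - p j) ^ 2 * weight U p ≤ ∑ V ∈ (powersetCard k univ).erase U, weight V p := by
  have hw := weight_nonneg hp.1
  by_cases hj : j ∈ U
  · have hle : (1 - p j) ^ 2 * weight U p ≤ (1 - p j) * weight U p :=
      mul_le_mul_of_nonneg_right (pow_le_of_le_one (by linarith [(hp.1 j).2])
        (by linarith [(hp.1 j).1]) two_ne_zero) (hw U)
    simp only [eU, hj, if_true]
    refine hle.trans ((one_sub_mul_weight_le_sum_swap hp.1 hj).trans
      (sum_comp_le_sum_of_injOn ?_ (fun i hi => insert_erase_mem_powersetCard_erase hU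
        (mem_compl.1 hi) hj) fun V _ => hw V))
    intro i hi i' _ h
    exact (insert_inj fun h' => mem_compl.1 hi (mem_of_mem_erase h')).1 h
  · simp only [eU, hj, if_false, zero_sub, neg_sq]
    refine (sq_mul_weight_le_sum_swap hp.1 (sum_one_sub_eq_sum_compl hU hp.2) hj).trans
      (sum_comp_le_sum_of_injOn ?_ (fun i hi => insert_erase_mem_powersetCard_erase hU hj hi)
        fun V _ => hw V)
    intro i hi i' _ h
    have h := congrArg (·.erase j) h
    simp only [erase_insert (fun h' => hj (mem_of_mem_erase h'))] at h
    exact (erase_inj U hi).1 h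

lemma gSampford_div_sumg (hkn : k < n) (U : Finset (Fin n)) (p : Fin n → ℝ) :
    gSampford n k U p / sumg n k p =
      weight U p / ∑ V ∈ powersetCard k univ, weight V p := by
  have hc : 1 / ((n : ℝ) - k) ≠ 0 := by
    have : (k : ℝ) < n := by exact_mod_cast hkn
    exact one_div_ne_zero (by linarith)
  have hg (V : Finset (Fin n)) : gSampford n k V p = 1 / ((n : ℝ) - k) * weight V p := by
    rw [gSampford, weight]; ring
  simp only [sumg, hg, ← mul_sum, mul_div_mul_left _ _ hc]

/-- The witness is any `V` of size `k` between `{i | p i = 1}` and `{i | 0 < p i}`. -/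
lemma exists_weight_pos {p : Fin n → ℝ} (hp : p ∈ Ksimplex n k)
    (hvert : ¬∃ V : Finset (Fin n), V.card = k ∧ p = eU V) :
    ∃ V ∈ powersetCard k univ, 0 < weight V p := by
  classical
  obtain ⟨hp01, hsum⟩ := hp
  set P := univ.filter (fun i => p i = 1)
  set T := univ.filter (fun i => 0 < p i)
  have hPT : P ⊆ T := fun i hi => by simp_all [P, T]
  have hPk : P.card ≤ k := by
    have hP : ∑ i ∈ P, p i = P.card := by
      rw [card_eq_sum_ones, Nat.cast_sum, Nat.cast_one]
      exact sum_congr rfl fun i hi => (mem_filter.1 hi).2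
    have : (P.card : ℝ) ≤ k := hP ▸ hsum ▸ sum_le_univ_sum_of_nonneg fun i => (hp01 i).1
    exact_mod_cast this
  have hkT : k ≤ T.card := by
    have hT : ∑ i ∈ T, p i = k :=
      hsum ▸ sum_filter_of_ne fun i _ h => lt_of_le_of_ne (hp01 i).1 (Ne.symm h)
    have : (k : ℝ) ≤ T.card := by
      rw [← hT, card_eq_sum_ones, Nat.cast_sum, Nat.cast_one]
      exact sum_le_sum fun i _ => (hp01 i).2
    exact_mod_cast this
  obtain ⟨V, hPV, hVT, hV⟩ := exists_subsuperset_card_eq hPT hPk hkT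
  refine ⟨V, mem_powersetCard_univ.2 hV, mul_pos (mul_pos ?_ ?_) ?_⟩
  · exact prod_pos fun i hi => (mem_filter.1 (hVT hi)).2
  · refine prod_pos fun i hi => sub_pos.2 (lt_of_le_of_ne (hp01 i).2 fun h => ?_)
    exact mem_compl.1 hi (hPV (mem_filter.2 ⟨mem_univ i, h⟩))
  · obtain ⟨i, hi⟩ : ∃ i, p i ≠ eU V i := by
      by_contra! h
      exact hvert ⟨V, hV, funext h⟩
    by_cases hiV : i ∈ V
    · simp only [eU, hiV, if_true] at hi
      rw [← sum_one_sub_eq_sum_compl hV hsum]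
      exact sum_pos' (fun l _ => sub_nonneg.2 (hp01 l).2)
        ⟨i, hiV, sub_pos.2 (lt_of_le_of_ne (hp01 i).2 hi)⟩
    · simp only [eU, hiV, if_false] at hi
      exact sum_pos' (fun l _ => (hp01 l).1)
        ⟨i, mem_compl.2 hiV, lt_of_le_of_ne (hp01 i).1 (Ne.symm hi)⟩

lemma half_sq_eU_sub_le_one_sub_fbar (hkn : k < n) {U : Finset (Fin n)} (hU : U.card = k)
    {p : Fin n → ℝ} (hp : p ∈ Ksimplex n k) (j : Fin n) :
    (eU U j - p j) ^ 2 / 2 ≤ 1 - fbar n k U p := by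
  have ht : (eU U j - p j) ^ 2 ≤ 1 := by
    have := (hp.1 j).1; have := (hp.1 j).2
    rw [sq_le_one_iff_abs_le_one, abs_le]
    by_cases hj : j ∈ U <;> simp only [eU, hj, if_true, if_false] <;> constructor <;> linarith
  have hR := sq_eU_sub_mul_weight_le hU hp j
  unfold fbar
  split_ifs with hpU hvert
  · simp [hpU]
  · linarith
  · obtain ⟨V, hV, hVpos⟩ := exists_weight_pos hp hvert
    have hUmem : U ∈ powersetCard k univ := mem_powersetCard_univ.2 hU
    set R := ∑ V ∈ (powersetCard k univ).erase U, weight V p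
    have hR0 : 0 ≤ R := sum_nonneg fun V _ => weight_nonneg hp.1 V
    have hwU := weight_nonneg hp.1 U
    have hsplit : ∑ V ∈ powersetCard k univ, weight V p = weight U p + R :=
      (add_sum_erase _ _ hUmem).symm
    have hpos : 0 < weight U p + R :=
      hsplit ▸ sum_pos' (fun V _ => weight_nonneg hp.1 V) ⟨V, hV, hVpos⟩
    rw [gSampford_div_sumg hkn, hsplit, one_sub_div hpos.ne', add_sub_cancel_left,
      le_div_iff₀ hpos]
    nlinarith [mul_le_mul_of_nonneg_right ht hR0]

end Simplex

end Sampford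

theorem stmt16_general (n k : ℕ) (hkn : k < n)
    (U : Finset (Fin n)) (hU : U.card = k) :
    PolyBoundedOn (Ksimplex n k) (fun p => 1 - fbar n k U p) := by
  refine ⟨2, 1 / 2, one_half_pos, fun A B hAB ⟨q, ⟨_, hqF⟩, hq⟩ p hp => ?_⟩
  have hqU : q ≠ eU U := by
    rintro rfl
    simp [fbar] at hq
  obtain ⟨j, hj⟩ := exists_index_of_mem_face_of_ne_eU hqF hqU
  calc 1 / 2 * facePoly A B p ^ 2 ≤ (eU U j - p j) ^ 2 / 2 := by
        linarith [facePoly_sq_le hAB hp.1 hj]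
    _ ≤ 1 - fbar n k U p := Sampford.half_sq_eU_sub_le_one_sub_fbar hkn hU hp j

theorem stmt16 (n k : ℕ) (hk : 1 ≤ k) (hkn : k < n)
    (U : Finset (Fin n)) (hU : U.card = k) :
    PolyBoundedOn (Ksimplex n k) (fun p => 1 - fbar n k U p) :=
  stmt16_general n k hkn U hU
end

section
/- Let K be an affine subspace of ℝ^n and let P = [0,1]^n ∩ K be nonempty. Let v be an extreme point of P, and let F be a nonempty exposed face of P (i.e., F is nonempty and exposed in P) with v ∉ F whose affine dimension equals (affine dimension of P) − 1. Then there exists a coordinate i ∈ {1,…,n} such that either (v_i > 0 and x_i = 0 for all x ∈ F) or (v_i < 1 and x_i = 1 for all x ∈ F). -/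
open Finset

/-!
If the conclusion failed, then for each coordinate bound `x i ≥ 0` or `x i ≤ 1` that is strict at
`v` some point of `F` would satisfy it strictly, and by convexity a single point `y ∈ F` would
satisfy all of them strictly. Then every bound tight at `y` is tight at `v`, so `y + t (y - v)`
stays in the cube (and in `K`) for small `t > 0`. But `y` maximizes the exposing functional `l`
on `P` and `l v < l y`, so `l` is larger still at `y + t (y - v)`, a contradiction.
-/

open Filter Topology

theorem convex_cube (n : ℕ) : Convex ℝ (cube n) := by
  have : cube n = Set.Icc 0 1 := by ext; simp [cube, Pi.le_def, forall_and]
  exact this ▸ convex_Icc 0 1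

theorem ConcaveOn.exists_forall_pos {E κ : Type*} [AddCommGroup E] [Module ℝ E] [Finite κ]
    {F : Set E} (hF : Convex ℝ F) (hne : F.Nonempty) {f : κ → E → ℝ}
    (hf : ∀ k, ConcaveOn ℝ F (f k)) (hnonneg : ∀ k, ∀ x ∈ F, 0 ≤ f k x) :
    ∃ y ∈ F, ∀ k, (∃ x ∈ F, 0 < f k x) → 0 < f k y := by
  classical
  have := Fintype.ofFinite κ
  suffices ∀ s : Finset κ, ∃ y ∈ F, ∀ k ∈ s, (∃ x ∈ F, 0 < f k x) → 0 < f k y by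
    simpa using this univ
  intro s
  induction s using Finset.induction_on with
  | empty => exact ⟨hne.some, hne.some_mem, by simp⟩
  | insert k s _ ih =>
    obtain ⟨y, hyF, hy⟩ := ih
    obtain ⟨x, hxF, hx⟩ : ∃ x ∈ F, (∃ x ∈ F, 0 < f k x) → 0 < f k x := by
      by_cases h : ∃ x ∈ F, 0 < f k x
      · obtain ⟨x, hxF, hx⟩ := h
        exact ⟨x, hxF, fun _ => hx⟩
      · exact ⟨y, hyF, fun h' => absurd h' h⟩
    have hmid (j : κ) : (f j y + f j x) / 2 ≤ f j ((1 / 2 : ℝ) • y + (1 / 2 : ℝ) • x) := by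
      have := (hf j).2 hyF hxF (by norm_num : (0 : ℝ) ≤ 1 / 2) (by norm_num : (0 : ℝ) ≤ 1 / 2)
        (by norm_num)
      simp only [smul_eq_mul] at this
      linarith
    refine ⟨_, hF hyF hxF (by norm_num : (0 : ℝ) ≤ 1 / 2) (by norm_num : (0 : ℝ) ≤ 1 / 2)
      (by norm_num), fun j hj hpos => ?_⟩
    have := hnonneg j y hyF
    have := hnonneg j x hxF
    rcases Finset.mem_insert.1 hj with rfl | hj
    · linarith [hmid j, hx hpos]
    · linarith [hmid j, hy j hj hpos]

theorem eventually_nonneg_add_mul_sub {a b : ℝ} (ha : 0 ≤ a) (hb : 0 ≤ b) (hab : 0 < a → 0 < b) :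
    ∀ᶠ t in 𝓝 0, 0 ≤ b + t * (b - a) := by
  rcases hb.eq_or_lt with rfl | hb
  · obtain rfl : a = 0 := le_antisymm (not_lt.1 fun h => (hab h).false) ha
    simp
  · have : Tendsto (fun t : ℝ => b + t * (b - a)) (𝓝 0) (𝓝 b) := by
      have hc : Continuous fun t : ℝ => b + t * (b - a) := by fun_prop
      simpa using hc.tendsto 0
    exact (this.eventually_const_lt hb).mono fun _ => le_of_lt

theorem eventually_add_smul_sub_mem_cube {n : ℕ} {v y : Fin n → ℝ} (hv : v ∈ cube n)
    (hy : y ∈ cube n) (h0 : ∀ i, 0 < v i → 0 < y i) (h1 : ∀ i, v i < 1 → y i < 1) :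
    ∀ᶠ t : ℝ in 𝓝 0, y + t • (y - v) ∈ cube n := by
  simp only [cube, Set.mem_ofPred_eq]
  refine eventually_all.2 fun i => ?_
  have hlow := eventually_nonneg_add_mul_sub (hv i).1 (hy i).1 (h0 i)
  -- the upper bound is the lower bound for the reflected point `1 - ·`
  have hup : ∀ᶠ t in 𝓝 (0 : ℝ), 0 ≤ (1 - y i) + t * ((1 - y i) - (1 - v i)) :=
    eventually_nonneg_add_mul_sub (by linarith [(hv i).2]) (by linarith [(hy i).2])
      fun h => by linarith [h1 i (by linarith)]
  filter_upwards [hlow, hup] with t ht₀ ht₁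
  simp only [Pi.add_apply, Pi.smul_apply, Pi.sub_apply, smul_eq_mul]
  constructor <;> linarith

theorem IsExposed.add_smul_sub_notMem {E : Type*} [AddCommGroup E] [Module ℝ E]
    [TopologicalSpace E] {A F : Set E} (hF : IsExposed ℝ A F) {y v : E} (hy : y ∈ F)
    (hv : v ∈ A) (hvF : v ∉ F) {t : ℝ} (ht : 0 < t) : y + t • (y - v) ∉ A := by
  obtain ⟨l, rfl⟩ := hF ⟨y, hy⟩
  intro hw
  have hlv : l v < l y := by
    by_contra! h
    exact hvF ⟨hv, fun z hz => (hy.2 z hz).trans h⟩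
  have := hy.2 _ hw
  simp only [map_add, map_smul, map_sub, smul_eq_mul] at this
  nlinarith

theorem stmt18_general {n : ℕ} (K : AffineSubspace ℝ (Fin n → ℝ))
    (P : Set (Fin n → ℝ)) (hP : P = cube n ∩ (K : Set (Fin n → ℝ)))
    (v : Fin n → ℝ) (hv : v ∈ Set.extremePoints ℝ P)
    (F : Set (Fin n → ℝ)) (hFexp : IsExposed ℝ P F) (hFne : F.Nonempty)
    (hvF : v ∉ F) :
    ∃ i : Fin n, (0 < v i ∧ ∀ x ∈ F, x i = 0) ∨ (v i < 1 ∧ ∀ x ∈ F, x i = 1) := by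
  subst hP
  have hvP := hv.1
  have hFP := hFexp.subset
  have hF := hFexp.convex ((convex_cube n).inter K.convex)
  by_contra! hcon
  obtain ⟨y, hyF, hy⟩ := ConcaveOn.exists_forall_pos hF hFne
    (f := Sum.elim (fun i x => x i) (fun i x => 1 - x i))
    (by
      rintro (i | i)
      · exact (LinearMap.proj i).concaveOn hF
      · exact (concaveOn_const 1 hF).sub ((LinearMap.proj i).convexOn hF))
    (by rintro (i | i) x hx <;> simp [(hFP hx).1 i])
  have h0 (i : Fin n) (hi : 0 < v i) : 0 < y i := by
    obtain ⟨x, hxF, hx⟩ := (hcon i).1 hi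
    exact hy (.inl i) ⟨x, hxF, ((hFP hxF).1 i).1.lt_of_ne' hx⟩
  have h1 (i : Fin n) (hi : v i < 1) : y i < 1 := by
    obtain ⟨x, hxF, hx⟩ := (hcon i).2 hi
    simpa using hy (.inr i) ⟨x, hxF, by simpa using ((hFP hxF).1 i).2.lt_of_ne hx⟩
  obtain ⟨t, htP, ht⟩ := ((eventually_add_smul_sub_mem_cube hvP.1 (hFP hyF).1 h0 h1).filter_mono
    nhdsWithin_le_nhds |>.and self_mem_nhdsWithin).exists (f := 𝓝[>] 0)
  have htK : y + t • (y - v) ∈ K := by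
    simpa [add_comm] using K.smul_vsub_vadd_mem t (hFP hyF).2 hvP.2 (hFP hyF).2
  exact hFexp.add_smul_sub_notMem hyF hvP hvF ht ⟨htP, htK⟩

theorem stmt18 {n : ℕ} (K : AffineSubspace ℝ (Fin n → ℝ))
    (P : Set (Fin n → ℝ)) (hP : P = cube n ∩ (K : Set (Fin n → ℝ)))
    (hPne : P.Nonempty)
    (v : Fin n → ℝ) (hv : v ∈ Set.extremePoints ℝ P)
    (F : Set (Fin n → ℝ)) (hFexp : IsExposed ℝ P F) (hFne : F.Nonempty)
    (hvF : v ∉ F)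
    (hdim : Module.finrank ℝ (affineSpan ℝ F).direction + 1 =
      Module.finrank ℝ (affineSpan ℝ P).direction) :
    ∃ i : Fin n, (0 < v i ∧ ∀ x ∈ F, x i = 0) ∨ (v i < 1 ∧ ∀ x ∈ F, x i = 1) :=
  stmt18_general K P hP v hv F hFexp hFne hvF
end

section
/- Let K = {(t, 1/2 − t) : t ∈ [0, 1/2]} ⊆ [0,1]², i.e., the convex hull of (1/2, 0) and (0, 1/2). There is no continuous function F : [0,1]² → [0,1] such that F(p) = p₁/(p₁ + p₂) for all p ∈ K and both F and 1 − F are polynomially bounded. -/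
open Finset

/-- A function `f : [0,1]^n → [0,1]` is polynomially bounded. -/
def PolyBounded {n : ℕ} (f : (Fin n → ℝ) → ℝ) : Prop :=
  ∃ (m : ℕ) (c : ℝ), 0 < c ∧ ∀ A B : Finset (Fin n), Disjoint A B →
    (¬ ∀ q ∈ face A B, f q = 0) →
    ∀ p ∈ cube n, c * facePoly A B p ^ m ≤ f p

/-!
On the face `{0} × (0,1)` the function `F` vanishes at `(0, 1/2)`, and `facePoly` is positive
at that point, so the lower bound from polynomial boundedness forces `F` to vanish on the whole
face. Symmetrically `1 - F` vanishes on `(0,1) × {0}`. Both faces have the origin in their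
closure, so continuity gives `F 0 = 0` and `F 0 = 1`.
-/

lemma face_subset_cube {n : ℕ} (A B : Finset (Fin n)) : face A B ⊆ cube n := by
  rintro p ⟨hA, hB, hS⟩ i
  by_cases hiA : i ∈ A
  · simp [hA i hiA]
  by_cases hiB : i ∈ B
  · simp [hB i hiB]
  · obtain ⟨h0, h1⟩ := hS i (by simp [hiA, hiB])
    exact ⟨h0.le, h1.le⟩

lemma facePoly_pos_of_mem_face {n : ℕ} {A B : Finset (Fin n)} {p : Fin n → ℝ}
    (hp : p ∈ face A B) : 0 < facePoly A B p := by
  obtain ⟨hA, hB, hS⟩ := hp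
  unfold facePoly
  refine mul_pos (mul_pos ?_ ?_) ?_
  · exact prod_pos fun i hi => by simp [hA i hi]
  · refine prod_pos fun i hi => ?_
    obtain ⟨h0, h1⟩ := hS i (by simpa using hi)
    exact mul_pos h0 (by linarith)
  · exact prod_pos fun i hi => by simp [hB i hi]

theorem PolyBounded.eq_zero_on_face {n : ℕ} {f : (Fin n → ℝ) → ℝ} (hf : PolyBounded f)
    {A B : Finset (Fin n)} (hAB : Disjoint A B) {p : Fin n → ℝ} (hp : p ∈ face A B)
    (hfp : f p = 0) : ∀ q ∈ face A B, f q = 0 := by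
  obtain ⟨m, c, hc, hbound⟩ := hf
  by_contra hne
  have hle := hbound A B hAB hne p (face_subset_cube A B hp)
  have hpos := facePoly_pos_of_mem_face hp
  have : 0 < c * facePoly A B p ^ m := by positivity
  linarith

lemma vertex_mem_closure_face {n : ℕ} {A B : Finset (Fin n)} (hAB : Disjoint A B) :
    (fun i => if i ∈ B then 1 else 0 : Fin n → ℝ) ∈ closure (face A B) := by
  let γ : ℝ → Fin n → ℝ := fun t i => if i ∈ A then 0 else if i ∈ B then 1 else t
  have hγ : Continuous γ := continuous_pi fun i => by
    unfold γ; split_ifs <;> fun_prop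
  have h0 : γ 0 = fun i => if i ∈ B then 1 else 0 := by
    funext i
    by_cases hiA : i ∈ A
    · simp [γ, hiA, disjoint_left.1 hAB hiA]
    · simp [γ, hiA]
  have hmaps : Set.MapsTo γ (Set.Ioo 0 1) (face A B) := by
    rintro t ⟨ht0, ht1⟩
    refine ⟨fun i hi => by simp [γ, hi], fun i hi => ?_, fun i hi => ?_⟩
    · simp [γ, hi, disjoint_right.1 hAB hi]
    · simp only [mem_union, not_or] at hi
      simp [γ, hi.1, hi.2, ht0, ht1]
  rw [← h0]
  exact map_mem_closure hγ (by simp [closure_Ioo zero_ne_one]) hmaps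

lemma zero_mem_closure_face {n : ℕ} (A : Finset (Fin n)) :
    (0 : Fin n → ℝ) ∈ closure (face A ∅) := by
  simpa [Pi.zero_def] using vertex_mem_closure_face (disjoint_empty_right A)

lemma ContinuousWithinAt.eq_of_mem_closure_of_forall_eq {X Y : Type*} [TopologicalSpace X]
    [TopologicalSpace Y] [T1Space Y] {f : X → Y} {s t : Set X} {x : X} {y : Y}
    (hf : ContinuousWithinAt f s x) (hts : t ⊆ s) (hx : x ∈ closure t)
    (h : ∀ z ∈ t, f z = y) : f x = y := by
  simpa using (hf.mono hts).mem_closure hx (t := {y}) h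

theorem stmt19 :
    ¬ ∃ F : (Fin 2 → ℝ) → ℝ,
      ContinuousOn F (cube 2) ∧
      (∀ p ∈ cube 2, F p ∈ Set.Icc (0 : ℝ) 1) ∧
      (∀ p ∈ segment ℝ (![(1 : ℝ) / 2, 0]) (![0, (1 : ℝ) / 2]),
        F p = p 0 / (p 0 + p 1)) ∧
      PolyBounded F ∧ PolyBounded (fun p => 1 - F p) := by
  rintro ⟨F, hcont, -, hseg, hF, hF'⟩
  have hFa : F ![0, 1 / 2] = 0 := by simpa using hseg _ (right_mem_segment ℝ _ _)
  have hFb : F ![1 / 2, 0] = 1 := by simpa using hseg _ (left_mem_segment ℝ _ _)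
  have ha : ![0, 1 / 2] ∈ face ({0} : Finset (Fin 2)) ∅ := by
    norm_num [face, Fin.forall_fin_two]
  have hb : ![1 / 2, 0] ∈ face ({1} : Finset (Fin 2)) ∅ := by
    norm_num [face, Fin.forall_fin_two]
  have hF0 := hF.eq_zero_on_face (disjoint_empty_right _) ha hFa
  have hF1 := hF'.eq_zero_on_face (disjoint_empty_right _) hb (sub_eq_zero.2 hFb.symm)
  have horigin : (0 : Fin 2 → ℝ) ∈ cube 2 := fun _ => by simp
  have h0 : F 0 = 0 := (hcont 0 horigin).eq_of_mem_closure_of_forall_eq (face_subset_cube _ _)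
    (zero_mem_closure_face _) hF0
  have h1 : F 0 = 1 := (hcont 0 horigin).eq_of_mem_closure_of_forall_eq (face_subset_cube _ _)
    (zero_mem_closure_face _) fun z hz => by linarith [hF1 z hz]
  exact zero_ne_one (h0.symm.trans h1)
end
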